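/- Let U = (1/√3)(X⊗I⊗I + Z⊗X⊗I + Z⊗Z⊗X), an 8×8 matrix. Then for every bit string s = s₁s₂s₃ ∈ {0,1}³, the recovery operator V_s = (X^{s₁} Z^{s₁}) ⊗ X^{s₂} ⊗ (Z^{s₂} X^{s₃}) satisfies V_s U |s⟩ = |W₃⟩. -/

import Mathlib

/-!
STATEMENT 2: Let U = (1/√3)(X⊗I⊗I + Z⊗X⊗I + Z⊗Z⊗X). Then for every bit
string s = s₁s₂s₃ ∈ {0,1}³, the recovery operator
V_s = (X^{s₁} Z^{s₁}) ⊗ X^{s₂} ⊗ (Z^{s₂} X^{s₃}) satisfies V_s U |s⟩ = |W₃⟩.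

We represent (ℂ²)^{⊗3} ≅ ℂ^8 by indexing coordinates with functions
`Fin 3 → Fin 2`.
-/

open Matrix

noncomputable section

/-- Pauli X matrix. -/
def X : Matrix (Fin 2) (Fin 2) ℂ := !![0, 1; 1, 0]

/-- Pauli Z matrix. -/
def Z : Matrix (Fin 2) (Fin 2) ℂ := !![1, 0; 0, -1]

/-- Computational basis vector `|s⟩` of (ℂ²)^{⊗N}. -/
def ketN {N : ℕ} (s : Fin N → Fin 2) : (Fin N → Fin 2) → ℂ :=
  fun t => if t = s then 1 else 0

/-- N-fold Kronecker (tensor) product of 2×2 matrices. -/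
def tpow {N : ℕ} (M : Fin N → Matrix (Fin 2) (Fin 2) ℂ) :
    Matrix (Fin N → Fin 2) (Fin N → Fin 2) ℂ :=
  Matrix.of fun i j => ∏ k, M k (i k) (j k)

/-- The N-qubit W state `|W_N⟩ = (1/√N) Σ_{k=1}^N X_k |0⟩^{⊗N}`:
the equal-amplitude superposition of the N computational basis states of
Hamming weight one. -/
def wState (N : ℕ) : (Fin N → Fin 2) → ℂ :=
  (Real.sqrt N : ℂ)⁻¹ • ∑ k : Fin N, ketN (fun j => if j = k then 1 else 0)

/-- `U = (1/√3)(X⊗I⊗I + Z⊗X⊗I + Z⊗Z⊗X)`. -/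
def U3 : Matrix (Fin 3 → Fin 2) (Fin 3 → Fin 2) ℂ :=
  (Real.sqrt 3 : ℂ)⁻¹ • (tpow ![X, 1, 1] + tpow ![Z, X, 1] + tpow ![Z, Z, X])


lemma mulVec_ketN {N : ℕ} (M : Matrix (Fin N → Fin 2) (Fin N → Fin 2) ℂ) (s : Fin N → Fin 2) :
    M.mulVec (ketN s) = fun t => M t s := by
  funext t
  simp [mulVec, dotProduct, ketN]

lemma tpow_mul {N : ℕ} (A B : Fin N → Matrix (Fin 2) (Fin 2) ℂ) :
    tpow A * tpow B = tpow (fun k => A k * B k) := by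
  ext i j
  simp only [tpow, Matrix.mul_apply, Matrix.of_apply, Finset.prod_univ_sum,
    Fintype.piFinset_univ]
  refine Finset.sum_congr rfl fun f _ => ?_
  rw [Finset.prod_mul_distrib]

lemma tpow3_apply (A : Fin 3 → Matrix (Fin 2) (Fin 2) ℂ) (i j : Fin 3 → Fin 2) :
    tpow A i j = A 0 (i 0) (j 0) * (A 1 (i 1) (j 1) * A 2 (i 2) (j 2)) := by
  simp [tpow, Fin.prod_univ_three, mul_assoc]

lemma wState3 : wState 3 =
    (Real.sqrt 3 : ℂ)⁻¹ • (ketN ![1,0,0] + ketN ![0,1,0] + ketN ![0,0,1]) := by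
  have h0 : (fun j : Fin 3 => if j = 0 then (1 : Fin 2) else 0) = ![1,0,0] := by
    funext j; fin_cases j <;> rfl
  have h1 : (fun j : Fin 3 => if j = 1 then (1 : Fin 2) else 0) = ![0,1,0] := by
    funext j; fin_cases j <;> rfl
  have h2 : (fun j : Fin 3 => if j = 2 then (1 : Fin 2) else 0) = ![0,0,1] := by
    funext j; fin_cases j <;> rfl
  rw [wState, Fin.sum_univ_three, h0, h1, h2]
  norm_num

set_option maxHeartbeats 4000000 in
theorem W3_recovery (s : Fin 3 → Fin 2) :
    (tpow ![X ^ (s 0 : ℕ) * Z ^ (s 0 : ℕ), X ^ (s 1 : ℕ),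
        Z ^ (s 1 : ℕ) * X ^ (s 2 : ℕ)]).mulVec (U3.mulVec (ketN s))
      = wState 3 := by
  obtain ⟨a, b, c, rfl⟩ : ∃ a b c, s = ![a, b, c] :=
    ⟨s 0, s 1, s 2, by funext i; fin_cases i <;> rfl⟩
  rw [Matrix.mulVec_mulVec, U3, Matrix.mul_smul, Matrix.mul_add, Matrix.mul_add,
    tpow_mul, tpow_mul, tpow_mul, Matrix.smul_mulVec, mulVec_ketN, wState3]
  funext t
  obtain ⟨x, y, z, rfl⟩ : ∃ x y z, t = ![x, y, z] :=
    ⟨t 0, t 1, t 2, by funext i; fin_cases i <;> rfl⟩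
  fin_cases a <;> fin_cases b <;> fin_cases c <;> fin_cases x <;> fin_cases y <;> fin_cases z <;>
    norm_num [tpow3_apply, ketN, X, Z, Matrix.mul_apply, Fin.sum_univ_two,
      Pi.smul_apply, smul_eq_mul, funext_iff, Fin.forall_fin_succ, Matrix.one_apply,
        Matrix.cons_val_two, Matrix.head_cons, Matrix.tail_cons]
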